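/- arXiv:1404.6245 — 8 statements merged into one kernel-verified Lean document; each statement's English description precedes it below -/
import Mathlib

section
/- For a finite signature, every simplification order is well-founded, and hence a reduction order. -/
/-!
Substituting one variable for all others (stability) turns an infinite descending chain
`e₀ > e₁ > ⋯` into one whose terms contain at most one variable. By Kruskal's tree theorem
(Nash-Williams' minimal bad sequence argument), some `eₐ` with `a < b`
homeomorphically embeds into `e_b`. Monotonicity and the subterm property make every
embedding a descent `e_b ≥ eₐ`, which together with `eₐ > e_b` contradicts irreflexivity.
-/

/-- First-order terms over a signature `F` with arity function `ar`
and variables from `V`. -/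
inductive Trm (F : Type) (ar : F → ℕ) (V : Type) : Type where
  | var : V → Trm F ar V
  | fn  : (f : F) → (Fin (ar f) → Trm F ar V) → Trm F ar V

variable {F V : Type} {ar : F → ℕ}

/-- Application of a substitution to a term. -/
def Trm.subst (θ : V → Trm F ar V) : Trm F ar V → Trm F ar V
  | .var x => θ x
  | .fn f ss => .fn f fun i => (ss i).subst θ

open Set.PartiallyWellOrderedOn Relation

theorem isBadSeq_ite {α : Type*} {r : α → α → Prop} {s : Set α} {f g : ℕ → α}
    (hf : IsBadSeq r s f) (hg : IsBadSeq r s g) (m : ℕ)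
    (hfg : ∀ a < m, ∀ k, ¬ r (f a) (g k)) :
    IsBadSeq r s fun j => if j < m then f j else g (j - m) := by
  refine ⟨fun j => ?_, fun a b hab => ?_⟩
  · dsimp only
    split_ifs
    exacts [hf.1 j, hg.1 _]
  · dsimp only
    split_ifs with ha hb hb
    · exact hf.2 a b hab
    · exact hfg a ha _
    · omega
    · exact hg.2 _ _ (by omega)

namespace Trm

def vars : Trm F ar V → Set V
  | .var x => {x}
  | .fn _ ts => ⋃ i, (ts i).vars

def args : Trm F ar V → Set (Trm F ar V)
  | .var _ => ∅
  | .fn _ ts => Set.range ts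

def size : Trm F ar V → ℕ
  | .var _ => 1
  | .fn _ ts => 1 + ∑ i, (ts i).size

def head : Trm F ar V → V ⊕ F
  | .var x => .inl x
  | .fn f _ => .inr f

theorem size_lt_of_mem_args {s t : Trm F ar V} (h : s ∈ t.args) : s.size < t.size := by
  cases t with
  | var _ => exact h.elim
  | fn f ts =>
    obtain ⟨i, rfl⟩ := h
    have := Finset.single_le_sum (f := fun j => (ts j).size) (fun _ _ => Nat.zero_le _)
      (Finset.mem_univ i)
    simp only [size]
    omega

theorem vars_subset_of_mem_args {s t : Trm F ar V} (h : s ∈ t.args) : s.vars ⊆ t.vars := by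
  cases t with
  | var _ => exact h.elim
  | fn f ts =>
    obtain ⟨i, rfl⟩ := h
    exact Set.subset_iUnion (fun j => (ts j).vars) i

theorem vars_subst_const_subset (v : V) (t : Trm F ar V) :
    (t.subst fun _ => .var v).vars ⊆ {v} := by
  induction t with
  | var x => exact subset_rfl
  | fn f ts ih => exact Set.iUnion_subset ih

theorem exists_subst_vars_subset_finite :
    ∃ (θ : V → Trm F ar V) (X : Set V), X.Finite ∧ ∀ t : Trm F ar V, (t.subst θ).vars ⊆ X := by
  cases isEmpty_or_nonempty V with
  | inl _ => exact ⟨.var, Set.univ, Set.toFinite _, fun _ => Set.subset_univ _⟩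
  | inr hV =>
    obtain ⟨v⟩ := hV
    exact ⟨fun _ => .var v, {v}, Set.finite_singleton v, vars_subst_const_subset v⟩

theorem head_mem_of_vars_subset {t : Trm F ar V} {X : Set V} (h : t.vars ⊆ X) :
    t.head ∈ Sum.inl '' X ∪ Set.range Sum.inr := by
  cases t with
  | var x => exact .inl ⟨x, h rfl, rfl⟩
  | fn f _ => exact .inr ⟨f, rfl⟩

theorem eq_var_of_head_eq_inl {t : Trm F ar V} {x : V} (h : t.head = .inl x) : t = .var x := by
  cases t with
  | var y => cases h; rfl
  | fn _ _ => cases h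

theorem exists_eq_fn_of_head_eq_inr {t : Trm F ar V} {f : F} (h : t.head = .inr f) :
    ∃ ts, t = .fn f ts := by
  cases t with
  | var _ => cases h
  | fn g ts => cases h; exact ⟨ts, rfl⟩

/-- Homeomorphic embedding of `s` into `t`. -/
inductive Embeds : Trm F ar V → Trm F ar V → Prop
  | var (x : V) : Embeds (.var x) (.var x)
  | arg {s : Trm F ar V} {f : F} {ts : Fin (ar f) → Trm F ar V} (i : Fin (ar f)) :
      Embeds s (ts i) → Embeds s (.fn f ts)
  | fn {f : F} {ss ts : Fin (ar f) → Trm F ar V} :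
      (∀ i, Embeds (ss i) (ts i)) → Embeds (.fn f ss) (.fn f ts)

theorem Embeds.refl : ∀ t : Trm F ar V, Embeds t t
  | .var x => .var x
  | .fn _ ts => .fn fun i => Embeds.refl (ts i)

theorem Embeds.trans {s t u : Trm F ar V} (hst : Embeds s t) (htu : Embeds t u) :
    Embeds s u := by
  induction htu generalizing s with
  | var _ => exact hst
  | arg i _ ih => exact .arg i (ih hst)
  | fn _ ih =>
    cases hst with
    | arg j hst => exact .arg j (ih j hst)
    | fn hst => exact .fn fun i => ih i (hst i)

instance : IsPreorder (Trm F ar V) Embeds where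
  refl := Embeds.refl
  trans _ _ _ := Embeds.trans

theorem Embeds.of_mem_args {s t u : Trm F ar V} (hst : Embeds s t) (ht : t ∈ u.args) :
    Embeds s u := by
  cases u with
  | var _ => exact ht.elim
  | fn f ts =>
    obtain ⟨i, rfl⟩ := ht
    exact .arg i hst

theorem partiallyWellOrderedOn_args_of_isMinBadSeq {S : Set (Trm F ar V)}
    (hS : ∀ t ∈ S, t.args ⊆ S) {g : ℕ → Trm F ar V} (hbad : IsBadSeq Embeds S g)
    (hmin : ∀ n, IsMinBadSeq Embeds size S n g) :
    (⋃ n, (g n).args).PartiallyWellOrderedOn Embeds := by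
  rw [iff_forall_not_isBadSeq]
  rintro h ⟨hmem, hhbad⟩
  simp only [Set.mem_iUnion] at hmem
  choose n hn using hmem
  set k₀ := Function.argmin n
  have hk₀ : ∀ k, n k₀ ≤ n k := fun k => Function.argmin_le n k
  -- Replacing `g` from position `n k₀` on by `h k₀, h (k₀ + 1), …` gives a smaller bad sequence.
  have htail : IsBadSeq Embeds S fun k => h (k₀ + k) :=
    ⟨fun k => hS _ (hbad.1 _) (hn _), fun a b hab => hhbad _ _ (by omega)⟩
  refine hmin (n k₀) _ (fun m hm => by simp [hm]) ?_ (isBadSeq_ite hbad htail (n k₀) ?_)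
  · simpa using size_lt_of_mem_args (hn k₀)
  · intro a ha k hemb
    exact hbad.2 a _ (ha.trans_le (hk₀ _)) (hemb.of_mem_args (hn _))

theorem exists_embeds_of_partiallyWellOrderedOn_args [Finite F] {X : Set V} (hX : X.Finite)
    {g : ℕ → Trm F ar V} (hg : ∀ n, (g n).vars ⊆ X)
    (hargs : (⋃ n, (g n).args).PartiallyWellOrderedOn Embeds) :
    ∃ a b, a < b ∧ Embeds (g a) (g b) := by
  have hheads : (Sum.inl '' X ∪ Set.range Sum.inr : Set (V ⊕ F)).Finite :=
    (hX.image _).union (Set.finite_range _)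
  obtain ⟨φ, hφ⟩ := (hheads.partiallyWellOrderedOn (r := Eq)).exists_monotone_subseq
    (f := fun n => (g n).head) fun n => head_mem_of_vars_subset (hg n)
  have hhead : ∀ k, (g (φ k)).head = (g (φ 0)).head := fun k => (hφ 0 k k.zero_le).symm
  cases h₀ : g (φ 0) with
  | var x =>
    refine ⟨φ 0, φ 1, φ.strictMono zero_lt_one, ?_⟩
    rw [h₀, eq_var_of_head_eq_inl ((hhead 1).trans (by rw [h₀]; rfl))]
    exact .var x
  | fn f _ =>
    choose ts hts using fun k => exists_eq_fn_of_head_eq_inr ((hhead k).trans (by rw [h₀]; rfl))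
    obtain ⟨a, b, hab, hemb⟩ := (Set.PartiallyWellOrderedOn.pi fun _ : Fin (ar f) => hargs).exists_lt
      (f := ts) fun k i _ => Set.mem_iUnion.2 ⟨φ k, by rw [hts]; exact ⟨i, rfl⟩⟩
    exact ⟨φ a, φ b, φ.strictMono hab, by rw [hts, hts]; exact .fn hemb⟩

theorem partiallyWellOrderedOn_embeds [Finite F] {X : Set V} (hX : X.Finite) :
    {t : Trm F ar V | t.vars ⊆ X}.PartiallyWellOrderedOn Embeds := by
  rw [iff_not_exists_isMinBadSeq size]
  rintro ⟨g, hbad, hmin⟩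
  have hclosed : ∀ t ∈ {t : Trm F ar V | t.vars ⊆ X}, t.args ⊆ {t | t.vars ⊆ X} :=
    fun _ ht _ hs => (vars_subset_of_mem_args hs).trans ht
  obtain ⟨a, b, hab, hemb⟩ := exists_embeds_of_partiallyWellOrderedOn_args hX hbad.1
    (partiallyWellOrderedOn_args_of_isMinBadSeq hclosed hbad hmin)
  exact hbad.2 a b hab hemb

section Monotone

variable {r : Trm F ar V → Trm F ar V → Prop}
  (hmono : ∀ (f : F) (ss : Fin (ar f) → Trm F ar V) (i : Fin (ar f)) (t : Trm F ar V),
    r (ss i) t → r (.fn f ss) (.fn f (Function.update ss i t)))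
include hmono

theorem reflTransGen_fn_update {f : F} {ss : Fin (ar f) → Trm F ar V} {i : Fin (ar f)}
    {t : Trm F ar V} (h : ReflTransGen r (ss i) t) :
    ReflTransGen r (.fn f ss) (.fn f (Function.update ss i t)) := by
  induction h with
  | refl => rw [Function.update_eq_self]
  | @tail b c _ hbc ih =>
    have := hmono f (Function.update ss i b) i c (by rwa [Function.update_self])
    rw [Function.update_idem] at this
    exact ih.tail this

theorem reflTransGen_fn {f : F} {ss ts : Fin (ar f) → Trm F ar V}
    (h : ∀ i, ReflTransGen r (ss i) (ts i)) : ReflTransGen r (.fn f ss) (.fn f ts) := by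
  classical
  suffices ∀ D : Finset (Fin (ar f)), ReflTransGen r (.fn f ss) (.fn f (D.piecewise ts ss)) by
    simpa using this Finset.univ
  intro D
  induction D using Finset.induction_on with
  | empty => simpa using ReflTransGen.refl
  | insert j D hj ih =>
    rw [Finset.piecewise_insert]
    refine ih.trans (reflTransGen_fn_update hmono ?_)
    rw [Finset.piecewise_eq_of_notMem _ _ _ hj]
    exact h j

theorem Embeds.reflTransGen
    (hsub : ∀ (f : F) (ss : Fin (ar f) → Trm F ar V) (i : Fin (ar f)), r (.fn f ss) (ss i))
    {s t : Trm F ar V} (h : Embeds s t) : ReflTransGen r t s := by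
  induction h with
  | var _ => exact .refl
  | arg i _ ih => exact ih.head (hsub _ _ i)
  | fn _ ih => exact reflTransGen_fn hmono ih

end Monotone

theorem Embeds.not_gt {GT : Trm F ar V → Trm F ar V → Prop} [IsTrans _ GT]
    (hirrefl : ∀ s, ¬ GT s s)
    (hmono : ∀ (f : F) (ss : Fin (ar f) → Trm F ar V) (i : Fin (ar f)) (t : Trm F ar V),
      GT (ss i) t → GT (.fn f ss) (.fn f (Function.update ss i t)))
    (hsub : ∀ (f : F) (ss : Fin (ar f) → Trm F ar V) (i : Fin (ar f)), GT (.fn f ss) (ss i))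
    {s t : Trm F ar V} (h : Embeds s t) : ¬ GT s t := by
  intro hst
  exact hirrefl s (transGen_eq_self (r := GT) ▸ TransGen.head' hst (h.reflTransGen hmono hsub))

end Trm

/-- For a finite signature, every simplification order (a monotonic,
stable strict order with the subterm property) is well-founded, and
hence a reduction order. -/
theorem simplification_order_well_founded
    {F V : Type} [Finite F] {ar : F → ℕ}
    (GT : Trm F ar V → Trm F ar V → Prop)
    (htrans : Transitive GT)
    (hirrefl : ∀ s, ¬ GT s s)
    (hmono : ∀ (f : F) (ss : Fin (ar f) → Trm F ar V) (i : Fin (ar f)) (t : Trm F ar V),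
        GT (ss i) t → GT (.fn f ss) (.fn f (Function.update ss i t)))
    (hstable : ∀ (s t : Trm F ar V) (θ : V → Trm F ar V),
        GT s t → GT (s.subst θ) (t.subst θ))
    (hsub : ∀ (f : F) (ss : Fin (ar f) → Trm F ar V) (i : Fin (ar f)),
        GT (.fn f ss) (ss i)) :
    WellFounded (Function.swap GT) := by
  have : IsTrans _ GT := ⟨fun _ _ _ h₁ h₂ => htrans h₁ h₂⟩
  obtain ⟨θ, X, hX, hθ⟩ := Trm.exists_subst_vars_subset_finite (F := F) (ar := ar) (V := V)
  refine wellFounded_iff_isEmpty_descending_chain.2 ⟨fun ⟨e, he⟩ => ?_⟩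
  obtain ⟨a, b, hab, hemb⟩ :=
    (Trm.partiallyWellOrderedOn_embeds hX).exists_lt (f := fun n => (e n).subst θ) fun n => hθ (e n)
  exact hemb.not_gt hirrefl hmono hsub
    (hstable _ _ θ (Nat.rel_of_forall_rel_succ_of_lt GT he hab))
end

section
/- Let Asum be the algebra on {a ∈ ℕ | a ≥ w0} interpreting each n-ary symbol f as f(a1,...,an) = w(f) + a1 + ... + an, for a weight function w : Σ → ℕ with w(c) ≥ w0 for every constant c. Then for terms s, t: s ≥_Asum t (meaning the interpretation of s is ≥ that of t under every assignment of values ≥ w0 to variables) if and only if |s|_x ≥ |t|_x for all variables x and w(s) ≥ w(t), where w(s) denotes the weight of s computed by assigning w0 to variables. The analogous equivalence holds for strict comparison >. -/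
variable {F V : Type} {ar : F → ℕ}

/-- Interpretation of a term in the summation algebra `Asum`:
`f` is interpreted as `w f + Σ arguments`; variables take the value
given by the assignment `α`. -/
def evalSum (w : F → ℕ) (α : V → ℕ) : Trm F ar V → ℕ
  | .var x => α x
  | .fn f ss => w f + ∑ i, evalSum w α (ss i)

/-- Number of occurrences of the variable `x` in a term. -/
def cnt [DecidableEq V] (x : V) : Trm F ar V → ℕ
  | .var y => if y = x then 1 else 0
  | .fn _ ss => ∑ i, cnt x (ss i)

def varsT [DecidableEq V] : Trm F ar V → Finset V
  | .var x => {x}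
  | .fn _ ss => Finset.univ.biUnion fun i => varsT (ss i)

lemma cnt_eq_zero_of_not_mem [DecidableEq V] {x : V} {u : Trm F ar V}
    (h : x ∉ varsT u) : cnt x u = 0 := by
  induction u with
  | var y =>
    simp only [varsT, Finset.mem_singleton] at h
    simp [cnt, if_neg (Ne.symm h)]
  | fn f ss ih =>
    simp only [varsT, Finset.mem_biUnion, Finset.mem_univ, true_and, not_exists] at h
    simp only [cnt]
    exact Finset.sum_eq_zero fun i _ => ih i (h i)

lemma eval_decomp [DecidableEq V] (w : F → ℕ) (w0 : ℕ) (α : V → ℕ)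
    (hα : ∀ v, w0 ≤ α v) (u : Trm F ar V) :
    evalSum w α u =
      evalSum w (fun _ => w0) u + ∑ x ∈ varsT u, cnt x u * (α x - w0) := by
  induction u with
  | var y =>
    simp [evalSum, varsT, cnt]
    have := hα y; omega
  | fn f ss ih =>
    simp only [evalSum, varsT, cnt]
    rw [Finset.sum_congr rfl fun i _ => ih i, Finset.sum_add_distrib]
    have h1 : ∀ i : Fin (ar f),
        (∑ x ∈ varsT (ss i), cnt x (ss i) * (α x - w0)) =
        ∑ x ∈ Finset.univ.biUnion (fun j => varsT (ss j)), cnt x (ss i) * (α x - w0) := by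
      intro i
      refine Finset.sum_subset (Finset.subset_biUnion_of_mem (fun j => varsT (ss j)) (Finset.mem_univ i)) ?_
      intro x _ hx
      rw [cnt_eq_zero_of_not_mem hx, zero_mul]
    rw [Finset.sum_congr rfl fun i _ => h1 i, Finset.sum_comm]
    have h2 : ∀ x ∈ Finset.univ.biUnion (fun j => varsT (ss j)),
        (∑ i, cnt x (ss i) * (α x - w0)) = (∑ i, cnt x (ss i)) * (α x - w0) :=
      fun x _ => (Finset.sum_mul _ _ _).symm
    rw [Finset.sum_congr rfl h2]
    omega

lemma eval_bump [DecidableEq V] (w : F → ℕ) (w0 N : ℕ) (x : V) (u : Trm F ar V) :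
    evalSum w (fun v => w0 + if v = x then N else 0) u =
      evalSum w (fun _ => w0) u + N * cnt x u := by
  induction u with
  | var y => by_cases h : y = x <;> simp [evalSum, cnt, h]
  | fn f ss ih =>
    simp only [evalSum, cnt]
    rw [Finset.sum_congr rfl fun i _ => ih i, Finset.sum_add_distrib, Finset.mul_sum]
    omega

lemma count_le_of_all {bt bs ct cs : ℕ} (h : ∀ N, bt + N * ct ≤ bs + N * cs) : ct ≤ cs := by
  by_contra hc
  push_neg at hc
  have := h (bs + 1)
  nlinarith

lemma sum_part_le [DecidableEq V] {s t : Trm F ar V} (hc : ∀ x, cnt x t ≤ cnt x s)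
    (c : V → ℕ) :
    ∑ x ∈ varsT t, cnt x t * c x ≤ ∑ x ∈ varsT s, cnt x s * c x := by
  have ht : ∑ x ∈ varsT t, cnt x t * c x = ∑ x ∈ varsT t ∪ varsT s, cnt x t * c x :=
    Finset.sum_subset Finset.subset_union_left
      (by intro x _ hx; rw [cnt_eq_zero_of_not_mem hx, zero_mul])
  have hs : ∑ x ∈ varsT s, cnt x s * c x = ∑ x ∈ varsT t ∪ varsT s, cnt x s * c x :=
    Finset.sum_subset Finset.subset_union_right
      (by intro x _ hx; rw [cnt_eq_zero_of_not_mem hx, zero_mul])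
  rw [ht, hs]
  exact Finset.sum_le_sum fun x _ => Nat.mul_le_mul_right _ (hc x)

/-- `s ≥_Asum t` (the interpretation of `s` is ≥ that of `t` under every
assignment of values ≥ w0 to variables) iff `|s|_x ≥ |t|_x` for all
variables `x` and `w(s) ≥ w(t)`, where `w(s)` is the weight of `s`
computed by assigning `w0` to variables; and analogously for `>`. -/
theorem asum_ge_iff_counts_and_weight
    {F V : Type} {ar : F → ℕ} [DecidableEq V]
    (w : F → ℕ) (w0 : ℕ)
    (hconst : ∀ f : F, ar f = 0 → w0 ≤ w f)
    (s t : Trm F ar V) :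
    ((∀ α : V → ℕ, (∀ v, w0 ≤ α v) → evalSum w α t ≤ evalSum w α s) ↔
      ((∀ x : V, cnt x t ≤ cnt x s) ∧
        evalSum w (fun _ => w0) t ≤ evalSum w (fun _ => w0) s)) ∧
    ((∀ α : V → ℕ, (∀ v, w0 ≤ α v) → evalSum w α t < evalSum w α s) ↔
      ((∀ x : V, cnt x t ≤ cnt x s) ∧
        evalSum w (fun _ => w0) t < evalSum w (fun _ => w0) s)) := by

  have counts : ∀ (h : ∀ α : V → ℕ, (∀ v, w0 ≤ α v) → evalSum w α t ≤ evalSum w α s)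
      (x : V), cnt x t ≤ cnt x s := by
    intro h x
    apply count_le_of_all (bt := evalSum w (fun _ => w0) t) (bs := evalSum w (fun _ => w0) s)
    intro N
    have := h (fun v => w0 + if v = x then N else 0) (fun v => Nat.le_add_right _ _)
    rwa [eval_bump, eval_bump] at this
  have bwd : ∀ (hc : ∀ x : V, cnt x t ≤ cnt x s) (α : V → ℕ) (hα : ∀ v, w0 ≤ α v),
      evalSum w α t + evalSum w (fun _ => w0) s ≤
        evalSum w α s + evalSum w (fun _ => w0) t := by
    intro hc α hα
    rw [eval_decomp w w0 α hα s, eval_decomp w w0 α hα t]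
    have := sum_part_le (s := s) (t := t) hc (fun x => α x - w0)
    omega
  constructor
  · constructor
    · intro h
      exact ⟨counts h, h (fun _ => w0) (fun _ => le_refl _)⟩
    · rintro ⟨hc, hb⟩ α hα
      have := bwd hc α hα
      omega
  · constructor
    · intro h
      refine ⟨counts (fun α hα => le_of_lt (h α hα)), h (fun _ => w0) (fun _ => le_refl _)⟩
    · rintro ⟨hc, hb⟩ α hα
      have := bwd hc α hα
      omega
end

section
/- The weighted path order >_WPO is transitive: if s >_WPO t and t >_WPO u then s >_WPO u; likewise the weak version ≥_WPO is transitive. -/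
variable {F V : Type} {ar : F → ℕ}

/-- Strict part of a quasi-precedence. -/
def precGT (prec : F → F → Prop) (f g : F) : Prop := prec f g ∧ ¬ prec g f
/-- Equivalence part of a quasi-precedence. -/
def precEQ (prec : F → F → Prop) (f g : F) : Prop := prec f g ∧ prec g f

/-- Strict lexicographic extension of (GE, GT) to lists. -/
inductive LexGT {α : Type} (GE GT : α → α → Prop) : List α → List α → Prop
  | cons_nil {a l} : LexGT GE GT (a :: l) []
  | head {a b l m} : GT a b → LexGT GE GT (a :: l) (b :: m)
  | tail {a b l m} : GE a b → LexGT GE GT l m → LexGT GE GT (a :: l) (b :: m)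

/-- Weak lexicographic extension of (GE, GT) to lists. -/
inductive LexGE {α : Type} (GE GT : α → α → Prop) : List α → List α → Prop
  | nil {l} : LexGE GE GT l []
  | head {a b l m} : GT a b → LexGE GE GT (a :: l) (b :: m)
  | tail {a b l m} : GE a b → LexGE GE GT l m → LexGE GE GT (a :: l) (b :: m)

/-- The case analysis of the WPO definition, parameterized by the
lexicographic extension used (strict or weak). -/
def WPOCases (AGS AGT : Trm F ar V → Trm F ar V → Prop) (prec : F → F → Prop)
    (σ : ∀ f : F, List (Fin (ar f)))
    (GE GT : Trm F ar V → Trm F ar V → Prop)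
    (lex : List (Trm F ar V) → List (Trm F ar V) → Prop)
    (f : F) (ss : Fin (ar f) → Trm F ar V) (t : Trm F ar V) : Prop :=
  AGT (.fn f ss) t ∨
    (AGS (.fn f ss) t ∧
      ((∃ i ∈ σ f, GE (ss i) t) ∨
       (∃ g ts, t = Trm.fn g ts ∧ (∀ j ∈ σ g, GT (.fn f ss) (ts j)) ∧
         (precGT prec f g ∨ (precEQ prec f g ∧ lex ((σ f).map ss) ((σ g).map ts))))))

/-- The pair of relations (GE, GT) satisfies the defining equations of
the weighted path order, over term-level algebra orders AGS (weak) and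
AGT (strict), quasi-precedence `prec`, and (partial) status `σ`. -/
structure IsWPO (AGS AGT : Trm F ar V → Trm F ar V → Prop) (prec : F → F → Prop)
    (σ : ∀ f : F, List (Fin (ar f)))
    (GE GT : Trm F ar V → Trm F ar V → Prop) : Prop where
  ge_var : ∀ (x : V) (t : Trm F ar V), GE (.var x) t ↔ t = .var x
  gt_var : ∀ (x : V) (t : Trm F ar V), ¬ GT (.var x) t
  gt_fn : ∀ (f : F) (ss : Fin (ar f) → Trm F ar V) (t : Trm F ar V),
    GT (.fn f ss) t ↔ WPOCases AGS AGT prec σ GE GT (LexGT GE GT) f ss t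
  ge_fn : ∀ (f : F) (ss : Fin (ar f) → Trm F ar V) (t : Trm F ar V),
    GE (.fn f ss) t ↔ WPOCases AGS AGT prec σ GE GT (LexGE GE GT) f ss t

/-- A status is total iff each `σ f` is a permutation of all argument
positions of `f`. -/
def TotalStatus (σ : ∀ f : F, List (Fin (ar f))) : Prop :=
  ∀ f : F, (σ f).Perm (List.finRange (ar f))

/-!
Encode `>_WPO` and `≥_WPO` as `cond b GT GE` for a strictness flag `b`. Both transitivity claims
are instances of `s ≻_b₁ t → t ≻_b₂ u → s ≻_(b₁ || b₂) u`, proved by strong induction on the total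
size of `s`, `t`, `u`. Unfolding the two hypotheses, each case follows from compatibility of the
algebra orders or from the induction hypothesis on a triple in which one term is replaced by one
of its arguments, except when both come from the precedence clause: there the precedences
compose, and so do the lexicographic comparisons of the argument lists, by the induction
hypothesis on triples of arguments.
-/

section Lex

variable {α : Type} {GE GT : α → α → Prop}

theorem LexGT.toLexGE {l m : List α} (h : LexGT GE GT l m) : LexGE GE GT l m := by
  induction h with
  | cons_nil => exact .nil
  | head h => exact .head h
  | tail h _ ih => exact .tail h ih

def TransAt (GE GT : α → α → Prop) (a b c : α) : Prop :=
  ∀ b₁ b₂ : Bool, cond b₁ GT GE a b → cond b₂ GT GE b c → cond (b₁ || b₂) GT GE a c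

theorem lex_nil_left_iff (b : Bool) (m : List α) :
    cond b (LexGT GE GT) (LexGE GE GT) [] m ↔ b = false ∧ m = [] := by
  constructor
  · cases b <;> rintro ⟨⟩
    exact ⟨rfl, rfl⟩
  · rintro ⟨rfl, rfl⟩
    exact LexGE.nil

theorem lex_nil_right_iff (b : Bool) (l : List α) :
    cond b (LexGT GE GT) (LexGE GE GT) l [] ↔ (b = true → l ≠ []) := by
  cases b
  · simpa using LexGE.nil
  · cases l
    · simpa using fun h => nomatch (h : LexGT GE GT [] [])
    · simpa using LexGT.cons_nil

theorem lex_cons_cons_iff (b : Bool) (a c : α) (l m : List α) :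
    cond b (LexGT GE GT) (LexGE GE GT) (a :: l) (c :: m) ↔
      GT a c ∨ GE a c ∧ cond b (LexGT GE GT) (LexGE GE GT) l m := by
  cases b <;> simp only [cond_false, cond_true] <;> constructor
  · rintro (_ | h | ⟨h, h'⟩) <;> [exact .inl h; exact .inr ⟨h, h'⟩]
  · rintro (h | ⟨h, h'⟩) <;> [exact .head h; exact .tail h h']
  · rintro (_ | h | ⟨h, h'⟩) <;> [exact .inl h; exact .inr ⟨h, h'⟩]
  · rintro (h | ⟨h, h'⟩) <;> [exact .head h; exact .tail h h']

theorem lex_trans {l₁ l₂ l₃ : List α}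
    (H : ∀ a ∈ l₁, ∀ b ∈ l₂, ∀ c ∈ l₃, TransAt GE GT a b c) {b₁ b₂ : Bool}
    (h₁₂ : cond b₁ (LexGT GE GT) (LexGE GE GT) l₁ l₂)
    (h₂₃ : cond b₂ (LexGT GE GT) (LexGE GE GT) l₂ l₃) :
    cond (b₁ || b₂) (LexGT GE GT) (LexGE GE GT) l₁ l₃ := by
  induction l₁ generalizing l₂ l₃ with
  | nil =>
    obtain ⟨rfl, rfl⟩ := (lex_nil_left_iff _ _).1 h₁₂
    simpa using h₂₃
  | cons a l₁ ih =>
    cases l₃ with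
    | nil => simp [lex_nil_right_iff]
    | cons c l₃ =>
      obtain ⟨b, l₂, rfl⟩ : ∃ b l, l₂ = b :: l := by
        cases l₂ with
        | nil => simp [lex_nil_left_iff] at h₂₃
        | cons b l => exact ⟨b, l, rfl⟩
      have Habc := H a (by simp) b (by simp) c (by simp)
      rw [lex_cons_cons_iff] at h₁₂ h₂₃ ⊢
      rcases h₁₂ with hab | ⟨hab, hl₁₂⟩ <;> rcases h₂₃ with hbc | ⟨hbc, hl₂₃⟩
      · exact .inl (Habc true true hab hbc)
      · exact .inl (by simpa using Habc true false hab hbc)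
      · exact .inl (by simpa using Habc false true hab hbc)
      · refine .inr ⟨Habc false false hab hbc, ih ?_ hl₁₂ hl₂₃⟩
        intro x hx y hy z hz
        exact H x (by simp [hx]) y (by simp [hy]) z (by simp [hz])

end Lex

theorem precGT_or_precEQ_trans {F : Type} {prec : F → F → Prop}
    (hprec : ∀ ⦃f g h⦄, prec f g → prec g h → prec f h)
    {f g h : F} {P Q R : Prop} (hfg : precGT prec f g ∨ precEQ prec f g ∧ P)
    (hgh : precGT prec g h ∨ precEQ prec g h ∧ Q) (hPQ : P → Q → R) :
    precGT prec f h ∨ precEQ prec f h ∧ R := by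
  rcases hfg with ⟨hfg, hgf⟩ | ⟨⟨hfg, hgf⟩, hP⟩ <;>
    rcases hgh with ⟨hgh, hhg⟩ | ⟨⟨hgh, hhg⟩, hQ⟩
  · exact .inl ⟨hprec hfg hgh, fun hhf => hgf (hprec hgh hhf)⟩
  · exact .inl ⟨hprec hfg hgh, fun hhf => hgf (hprec hgh hhf)⟩
  · exact .inl ⟨hprec hfg hgh, fun hhf => hhg (hprec hhf hfg)⟩
  · exact .inr ⟨⟨hprec hfg hgh, hprec hhg hgf⟩, hPQ hP hQ⟩

def Trm.size_s6 : Trm F ar V → ℕ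
  | .var _ => 1
  | .fn _ ss => 1 + ∑ i, (ss i).size_s6

theorem Trm.size_arg_lt {f : F} (ss : Fin (ar f) → Trm F ar V) (i : Fin (ar f)) :
    (ss i).size_s6 < (Trm.fn f ss).size_s6 := by
  have := Finset.single_le_sum (f := fun j => (ss j).size_s6) (fun _ _ => Nat.zero_le _)
    (Finset.mem_univ i)
  simp only [Trm.size_s6]
  omega

theorem Trm.size_lt_of_mem_map {f : F} {ss : Fin (ar f) → Trm F ar V} {l : List (Fin (ar f))}
    {a : Trm F ar V} (ha : a ∈ l.map ss) : a.size_s6 < (Trm.fn f ss).size_s6 := by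
  obtain ⟨i, -, rfl⟩ := List.mem_map.1 ha
  exact Trm.size_arg_lt ss i

theorem Trm.strong_induction₃ {P : Trm F ar V → Trm F ar V → Trm F ar V → Prop}
    (step : ∀ s t u, (∀ s' t' u', s'.size_s6 + t'.size_s6 + u'.size_s6 < s.size_s6 + t.size_s6 + u.size_s6 →
      P s' t' u') → P s t u) (s t u : Trm F ar V) : P s t u := by
  suffices ∀ n s t u, s.size_s6 + t.size_s6 + u.size_s6 = n → P s t u from this _ s t u rfl
  intro n
  induction n using Nat.strong_induction_on with
  | _ n ih => exact fun s t u hn => step s t u fun s' t' u' h => ih _ (hn ▸ h) s' t' u' rfl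

namespace IsWPO

variable {AGS AGT : Trm F ar V → Trm F ar V → Prop} {prec : F → F → Prop}
  {σ : ∀ f : F, List (Fin (ar f))} {GE GT : Trm F ar V → Trm F ar V → Prop}

theorem ge_of_gt (hW : IsWPO AGS AGT prec σ GE GT) {s t : Trm F ar V} (h : GT s t) :
    GE s t := by
  cases s with
  | var x => exact absurd h (hW.gt_var x t)
  | fn f ss =>
    rw [hW.gt_fn] at h
    rw [hW.ge_fn]
    rcases h with h | ⟨hAGS, h | ⟨g, ts, rfl, hts, hfg⟩⟩
    · exact .inl h
    · exact .inr ⟨hAGS, .inl h⟩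
    · exact .inr ⟨hAGS, .inr ⟨g, ts, rfl, hts, hfg.imp_right (And.imp_right LexGT.toLexGE)⟩⟩

theorem ge_of_cond (hW : IsWPO AGS AGT prec σ GE GT) {b : Bool} {s t : Trm F ar V}
    (h : cond b GT GE s t) : GE s t := by
  cases b
  exacts [h, hW.ge_of_gt h]

theorem cond_of_gt (hW : IsWPO AGS AGT prec σ GE GT) {s t : Trm F ar V} (h : GT s t)
    (b : Bool) : cond b GT GE s t := by
  cases b
  exacts [hW.ge_of_gt h, h]

theorem ags_of_ge (hW : IsWPO AGS AGT prec σ GE GT) (hAGS_refl : ∀ s, AGS s s)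
    (hAGT_AGS : ∀ s t, AGT s t → AGS s t) {s t : Trm F ar V} (h : GE s t) : AGS s t := by
  cases s with
  | var x =>
    rw [(hW.ge_var x t).1 h]
    exact hAGS_refl _
  | fn f ss =>
    rcases (hW.ge_fn f ss t).1 h with h | ⟨h, -⟩
    exacts [hAGT_AGS _ _ h, h]

theorem cond_var_iff (hW : IsWPO AGS AGT prec σ GE GT) (b : Bool) (x : V) (t : Trm F ar V) :
    cond b GT GE (.var x) t ↔ b = false ∧ t = .var x := by
  cases b
  · simp [hW.ge_var]
  · simp [hW.gt_var]

theorem cond_fn_iff (hW : IsWPO AGS AGT prec σ GE GT) (b : Bool) (f : F)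
    (ss : Fin (ar f) → Trm F ar V) (t : Trm F ar V) :
    cond b GT GE (.fn f ss) t ↔
      WPOCases AGS AGT prec σ GE GT (cond b (LexGT GE GT) (LexGE GE GT)) f ss t := by
  cases b
  exacts [hW.ge_fn f ss t, hW.gt_fn f ss t]

theorem transAt_of_lt_size (hW : IsWPO AGS AGT prec σ GE GT)
    (hprec : ∀ ⦃f g h⦄, prec f g → prec g h → prec f h) (hGE_AGS : ∀ s t, GE s t → AGS s t)
    (hAGS_trans : ∀ ⦃s t u⦄, AGS s t → AGS t u → AGS s u)
    (hcompat1 : ∀ s t u, AGS s t → AGT t u → AGT s u)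
    (hcompat2 : ∀ s t u, AGT s t → AGS t u → AGT s u) {s t u : Trm F ar V}
    (IH : ∀ s' t' u', s'.size_s6 + t'.size_s6 + u'.size_s6 < s.size_s6 + t.size_s6 + u.size_s6 →
      TransAt GE GT s' t' u') :
    TransAt GE GT s t u := by
  intro b₁ b₂ hst htu
  have hAGS_tu := hGE_AGS _ _ (hW.ge_of_cond htu)
  cases s with
  | var x =>
    obtain ⟨rfl, rfl⟩ := (hW.cond_var_iff b₁ x t).1 hst
    simpa using htu
  | fn f ss =>
    rw [hW.cond_fn_iff]
    rcases (hW.cond_fn_iff _ _ _ _).1 hst with hAGT_st | ⟨hAGS_st, ⟨i, hi, hi_t⟩ | ⟨g, ts, rfl, hts, hfg⟩⟩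
    · exact .inl (hcompat2 _ _ _ hAGT_st hAGS_tu)
    · have := Trm.size_arg_lt ss i
      have hi_u := IH _ _ _ (by omega) false b₂ hi_t htu
      exact .inr ⟨hAGS_trans hAGS_st hAGS_tu, .inl ⟨i, hi, hW.ge_of_cond hi_u⟩⟩
    rcases (hW.cond_fn_iff _ _ _ _).1 htu with hAGT_tu | ⟨-, ⟨j, hj, hj_u⟩ | ⟨h, us, rfl, hus, hgh⟩⟩
    · exact .inl (hcompat1 _ _ _ hAGS_st hAGT_tu)
    · have := Trm.size_arg_lt ts j
      rw [← hW.cond_fn_iff]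
      exact hW.cond_of_gt (IH _ _ _ (by omega) true false (hts j hj) hj_u) _
    refine .inr ⟨hAGS_trans hAGS_st hAGS_tu, .inr ⟨h, us, rfl, fun k hk => ?_,
      precGT_or_precEQ_trans hprec hfg hgh (lex_trans fun a ha b hb c hc => ?_)⟩⟩
    · have := Trm.size_arg_lt us k
      simpa using IH _ _ _ (by omega) b₁ true hst (hus k hk)
    · have := Trm.size_lt_of_mem_map ha
      have := Trm.size_lt_of_mem_map hb
      have := Trm.size_lt_of_mem_map hc
      exact IH a b c (by omega)

end IsWPO

theorem wpo_transitive_general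
    {F V : Type} {ar : F → ℕ}
    (AGS AGT : Trm F ar V → Trm F ar V → Prop) (prec : F → F → Prop)
    (σ : ∀ f : F, List (Fin (ar f)))
    (GE GT : Trm F ar V → Trm F ar V → Prop)
    (hW : IsWPO AGS AGT prec σ GE GT)
    (hprec_trans : Transitive prec)
    (hAGS_refl : Reflexive AGS)
    (hAGS_trans : Transitive AGS)
    (hcompat1 : ∀ s t u, AGS s t → AGT t u → AGT s u)
    (hcompat2 : ∀ s t u, AGT s t → AGS t u → AGT s u)
    (hAGT_AGS : ∀ s t, AGT s t → AGS s t) :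
    Transitive GT ∧ Transitive GE := by
  have hGE_AGS : ∀ s t, GE s t → AGS s t := fun _ _ => hW.ags_of_ge hAGS_refl hAGT_AGS
  have key : ∀ s t u, TransAt GE GT s t u := Trm.strong_induction₃ fun _ _ _ IH =>
    hW.transAt_of_lt_size hprec_trans hGE_AGS hAGS_trans hcompat1 hcompat2 IH
  exact ⟨fun s t u => key s t u true true, fun s t u => key s t u false false⟩

/-- The weighted path order is transitive: both the strict version
`>_WPO` and the weak version `≥_WPO` are transitive. -/
theorem wpo_transitive
    {F V : Type} {ar : F → ℕ}
    (AGS AGT : Trm F ar V → Trm F ar V → Prop) (prec : F → F → Prop)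
    (σ : ∀ f : F, List (Fin (ar f)))
    (GE GT : Trm F ar V → Trm F ar V → Prop)
    (hW : IsWPO AGS AGT prec σ GE GT)
    (htot : TotalStatus σ)
    (hprec_refl : Reflexive prec) (hprec_trans : Transitive prec)
    (hAGS_refl : Reflexive AGS)
    (hAGS_trans : Transitive AGS) (hAGT_trans : Transitive AGT)
    (hcompat1 : ∀ s t u, AGS s t → AGT t u → AGT s u)
    (hcompat2 : ∀ s t u, AGT s t → AGS t u → AGT s u)
    (hAGT_AGS : ∀ s t, AGT s t → AGS s t)
    (hsimple : ∀ (f : F) (ss : Fin (ar f) → Trm F ar V) (i : Fin (ar f)),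
        i ∈ σ f → AGS (.fn f ss) (ss i)) :
    Transitive GT ∧ Transitive GE :=
  wpo_transitive_general AGS AGT prec σ GE GT hW hprec_trans hAGS_refl hAGS_trans hcompat1 hcompat2
    hAGT_AGS
end

section
/- The weighted path order satisfies compatibility: s ≥_WPO t >_WPO u implies s >_WPO u, and s >_WPO t ≥_WPO u implies s >_WPO u. -/
variable {F V : Type} {ar : F → ℕ}

namespace WPOAux

/-- Size of a term. -/
def sz : Trm F ar V → ℕ
  | .var _ => 1
  | .fn _ ss => 1 + ∑ i, sz (ss i)

lemma sz_pos (t : Trm F ar V) : 0 < sz t := by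
  cases t <;> simp only [sz] <;> omega

lemma sz_lt {f : F} (ss : Fin (ar f) → Trm F ar V) (i : Fin (ar f)) :
    sz (ss i) < sz (Trm.fn f ss) := by
  have h : sz (ss i) ≤ ∑ j, sz (ss j) := by
    exact Finset.single_le_sum (f := fun j => sz (ss j))
      (fun j _ => Nat.zero_le _) (Finset.mem_univ i)
  simp only [sz]
  omega

section Lex

variable {α : Type} {GE GT : α → α → Prop}

/-- Element-level compatibility triple. -/
def Compat3 (GE GT : α → α → Prop) (a b c : α) : Prop :=
  (GE a b → GT b c → GT a c) ∧ (GT a b → GE b c → GT a c) ∧ (GE a b → GE b c → GE a c)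

lemma lexGT_le : ∀ {l m : List α}, LexGT GE GT l m → LexGE GE GT l m := by
  intro l m h
  induction h with
  | cons_nil => exact .nil
  | head h => exact .head h
  | tail h _ ih => exact .tail h ih

lemma lexGE_lexGT (hgg : ∀ a b, GT a b → GE a b) :
    ∀ (m l k : List α), (∀ a ∈ l, ∀ b ∈ m, ∀ c ∈ k, Compat3 GE GT a b c) →
      LexGE GE GT l m → LexGT GE GT m k → LexGT GE GT l k := by
  intro m
  induction m with
  | nil => intro l k _ _ h2; cases h2
  | cons b m' ihm =>
    intro l k hs h1 h2
    cases h2 with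
    | cons_nil =>
      cases h1 with
      | head _ => exact .cons_nil
      | tail _ _ => exact .cons_nil
    | @head _ c _ k' hbc =>
      cases h1 with
      | @head a _ l' _ hab =>
        exact .head ((hs a (by simp) b (by simp) c (by simp)).2.1 hab (hgg _ _ hbc))
      | @tail a _ l' _ hab h1' =>
        exact .head ((hs a (by simp) b (by simp) c (by simp)).1 hab hbc)
    | @tail _ c _ k' hbc h2' =>
      cases h1 with
      | @head a _ l' _ hab =>
        exact .head ((hs a (by simp) b (by simp) c (by simp)).2.1 hab hbc)
      | @tail a _ l' _ hab h1' =>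
        refine .tail ((hs a (by simp) b (by simp) c (by simp)).2.2 hab hbc) ?_
        exact ihm l' k'
          (fun x hx y hy z hz => hs x (by simp [hx]) y (by simp [hy]) z (by simp [hz]))
          h1' h2'

lemma lexGT_lexGE (hgg : ∀ a b, GT a b → GE a b) :
    ∀ (m l k : List α), (∀ a ∈ l, ∀ b ∈ m, ∀ c ∈ k, Compat3 GE GT a b c) →
      LexGT GE GT l m → LexGE GE GT m k → LexGT GE GT l k := by
  intro m
  induction m with
  | nil =>
    intro l k _ h1 h2
    cases h1 with
    | cons_nil =>
      cases h2 with
      | nil => exact .cons_nil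
  | cons b m' ihm =>
    intro l k hs h1 h2
    cases h2 with
    | nil =>
      cases h1 with
      | head _ => exact .cons_nil
      | tail _ _ => exact .cons_nil
    | @head _ c _ k' hbc =>
      cases h1 with
      | @head a _ l' _ hab =>
        exact .head ((hs a (by simp) b (by simp) c (by simp)).2.1 hab (hgg _ _ hbc))
      | @tail a _ l' _ hab h1' =>
        exact .head ((hs a (by simp) b (by simp) c (by simp)).1 hab hbc)
    | @tail _ c _ k' hbc h2' =>
      cases h1 with
      | @head a _ l' _ hab =>
        exact .head ((hs a (by simp) b (by simp) c (by simp)).2.1 hab hbc)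
      | @tail a _ l' _ hab h1' =>
        refine .tail ((hs a (by simp) b (by simp) c (by simp)).2.2 hab hbc) ?_
        exact ihm l' k'
          (fun x hx y hy z hz => hs x (by simp [hx]) y (by simp [hy]) z (by simp [hz]))
          h1' h2'

lemma lexGE_trans (hgg : ∀ a b, GT a b → GE a b) :
    ∀ (m l k : List α), (∀ a ∈ l, ∀ b ∈ m, ∀ c ∈ k, Compat3 GE GT a b c) →
      LexGE GE GT l m → LexGE GE GT m k → LexGE GE GT l k := by
  intro m
  induction m with
  | nil =>
    intro l k _ h1 h2
    cases h2 with
    | nil => exact .nil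
  | cons b m' ihm =>
    intro l k hs h1 h2
    cases h2 with
    | nil => exact .nil
    | @head _ c _ k' hbc =>
      cases h1 with
      | @head a _ l' _ hab =>
        exact .head ((hs a (by simp) b (by simp) c (by simp)).2.1 hab (hgg _ _ hbc))
      | @tail a _ l' _ hab h1' =>
        exact .head ((hs a (by simp) b (by simp) c (by simp)).1 hab hbc)
    | @tail _ c _ k' hbc h2' =>
      cases h1 with
      | @head a _ l' _ hab =>
        exact .head ((hs a (by simp) b (by simp) c (by simp)).2.1 hab hbc)
      | @tail a _ l' _ hab h1' =>
        refine .tail ((hs a (by simp) b (by simp) c (by simp)).2.2 hab hbc) ?_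
        exact ihm l' k'
          (fun x hx y hy z hz => hs x (by simp [hx]) y (by simp [hy]) z (by simp [hz]))
          h1' h2'

end Lex

section Prec

variable {prec : F → F → Prop} {f g h : F}

lemma precGT_trans_GT (ht : Transitive prec) :
    precGT prec f g → precGT prec g h → precGT prec f h :=
  fun h1 h2 => ⟨ht h1.1 h2.1, fun hc => h1.2 (ht h2.1 hc)⟩

lemma precGT_trans_EQ (ht : Transitive prec) :
    precGT prec f g → precEQ prec g h → precGT prec f h :=
  fun h1 h2 => ⟨ht h1.1 h2.1, fun hc => h1.2 (ht h2.1 hc)⟩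

lemma precEQ_trans_GT (ht : Transitive prec) :
    precEQ prec f g → precGT prec g h → precGT prec f h :=
  fun h1 h2 => ⟨ht h1.1 h2.1, fun hc => h2.2 (ht hc h1.1)⟩

lemma precEQ_trans (ht : Transitive prec) :
    precEQ prec f g → precEQ prec g h → precEQ prec f h :=
  fun h1 h2 => ⟨ht h1.1 h2.1, ht h2.2 h1.2⟩

end Prec

end WPOAux

/-- Compatibility of the weighted path order (with partial status):
`s ≥_WPO t >_WPO u` implies `s >_WPO u`, and
`s >_WPO t ≥_WPO u` implies `s >_WPO u`. -/
theorem wpo_compatible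
    {F V : Type} {ar : F → ℕ}
    (AGS AGT : Trm F ar V → Trm F ar V → Prop) (prec : F → F → Prop)
    (σ : ∀ f : F, List (Fin (ar f)))
    (GE GT : Trm F ar V → Trm F ar V → Prop)
    (hW : IsWPO AGS AGT prec σ GE GT)
    (hprec_refl : Reflexive prec) (hprec_trans : Transitive prec)
    (hAGS_trans : Transitive AGS) (hAGT_trans : Transitive AGT)
    (hcompat1 : ∀ s t u, AGS s t → AGT t u → AGT s u)
    (hcompat2 : ∀ s t u, AGT s t → AGS t u → AGT s u)
    (hAGT_AGS : ∀ s t, AGT s t → AGS s t) :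
    (∀ s t u, GE s t → GT t u → GT s u) ∧
    (∀ s t u, GT s t → GE t u → GT s u) := by
  -- strict implies weak
  have hGTGE : ∀ a b : Trm F ar V, GT a b → GE a b := by
    intro a b h
    cases a with
    | var x => exact absurd h (hW.gt_var x b)
    | fn f ss =>
      rw [hW.gt_fn] at h
      rw [hW.ge_fn]
      simp only [WPOCases] at h ⊢
      rcases h with h | ⟨h1, h2⟩
      · exact Or.inl h
      · refine Or.inr ⟨h1, ?_⟩
        rcases h2 with h2 | ⟨g, ts, rfl, h3, h4⟩
        · exact Or.inl h2
        · refine Or.inr ⟨g, ts, rfl, h3, ?_⟩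
          rcases h4 with h4 | ⟨h4, h5⟩
          · exact Or.inl h4
          · exact Or.inr ⟨h4, WPOAux.lexGT_le h5⟩
  have hGT_AGS : ∀ t u : Trm F ar V, GT t u → AGS t u := by
    intro t u h
    cases t with
    | var x => exact absurd h (hW.gt_var x u)
    | fn g ts =>
      rw [hW.gt_fn] at h
      rcases h with h | ⟨h, _⟩
      · exact hAGT_AGS _ _ h
      · exact h
  have hGE_AGS : ∀ (g : F) (ts : Fin (ar g) → Trm F ar V) (u : Trm F ar V),
      GE (.fn g ts) u → AGS (.fn g ts) u := by
    intro g ts u h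
    rw [hW.ge_fn] at h
    rcases h with h | ⟨h, _⟩
    · exact hAGT_AGS _ _ h
    · exact h
  have key : ∀ n (s t u : Trm F ar V), WPOAux.sz s + WPOAux.sz t + WPOAux.sz u ≤ n →
      (GE s t → GT t u → GT s u) ∧ (GT s t → GE t u → GT s u) ∧
        (GE s t → GE t u → GE s u) := by
    intro n
    induction n with
    | zero =>
      intro s t u h
      have h1 := WPOAux.sz_pos s
      have h2 := WPOAux.sz_pos t
      have h3 := WPOAux.sz_pos u
      omega
    | succ n ih =>
      intro s t u hsz
      refine ⟨?_, ?_, ?_⟩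
      -- Claim 1: GE s t → GT t u → GT s u
      · intro hst htu
        cases s with
        | var x =>
          rw [hW.ge_var] at hst
          subst hst
          exact absurd htu (hW.gt_var x u)
        | fn f ss =>
          have hst₀ := hst
          have hAtu : AGS t u := hGT_AGS t u htu
          rw [hW.ge_fn] at hst
          simp only [WPOCases] at hst
          rcases hst with hst | ⟨hAst, hsub⟩
          · rw [hW.gt_fn]; left; exact hcompat2 _ _ _ hst hAtu
          · have hAsu : AGS (Trm.fn f ss) u := hAGS_trans hAst hAtu
            rcases hsub with ⟨i, hi, hge⟩ | ⟨g, ts, rfl, hjt, hpg⟩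
            · have hlt := WPOAux.sz_lt ss i
              have hGi : GT (ss i) u := (ih (ss i) t u (by omega)).1 hge htu
              rw [hW.gt_fn]
              simp only [WPOCases]
              exact Or.inr ⟨hAsu, Or.inl ⟨i, hi, hGTGE _ _ hGi⟩⟩
            · rw [hW.gt_fn] at htu
              simp only [WPOCases] at htu
              rcases htu with htu | ⟨_, hsub2⟩
              · rw [hW.gt_fn]; left; exact hcompat1 _ _ _ hAst htu
              · rcases hsub2 with ⟨j, hj, hgeju⟩ | ⟨f3, us, rfl, hku, hph⟩
                · have hlt := WPOAux.sz_lt ts j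
                  exact (ih (Trm.fn f ss) (ts j) u (by omega)).2.1 (hjt j hj) hgeju
                · rw [hW.gt_fn]
                  simp only [WPOCases]
                  refine Or.inr ⟨hAsu, Or.inr ⟨f3, us, rfl, ?_, ?_⟩⟩
                  · intro k hk
                    have hlt := WPOAux.sz_lt us k
                    exact (ih (Trm.fn f ss) (Trm.fn g ts) (us k) (by omega)).1
                      hst₀ (hku k hk)
                  · rcases hpg with hpg | ⟨hpg, hlex1⟩
                    · rcases hph with hph | ⟨hph, _⟩
                      · exact Or.inl (WPOAux.precGT_trans_GT hprec_trans hpg hph)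
                      · exact Or.inl (WPOAux.precGT_trans_EQ hprec_trans hpg hph)
                    · rcases hph with hph | ⟨hph, hlex2⟩
                      · exact Or.inl (WPOAux.precEQ_trans_GT hprec_trans hpg hph)
                      · refine Or.inr ⟨WPOAux.precEQ_trans hprec_trans hpg hph, ?_⟩
                        refine WPOAux.lexGE_lexGT hGTGE _ _ _ ?_ hlex1 hlex2
                        intro a ha b hb c hc
                        obtain ⟨i, _, rfl⟩ := List.mem_map.1 ha
                        obtain ⟨j, _, rfl⟩ := List.mem_map.1 hb
                        obtain ⟨k, _, rfl⟩ := List.mem_map.1 hc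
                        have h1 := WPOAux.sz_lt ss i
                        have h2 := WPOAux.sz_lt ts j
                        have h3 := WPOAux.sz_lt us k
                        exact ih _ _ _ (by omega)
      -- Claim 2: GT s t → GE t u → GT s u
      · intro hst htu
        cases s with
        | var x => exact absurd hst (hW.gt_var x t)
        | fn f ss =>
          have hst₀ := hst
          rw [hW.gt_fn] at hst
          simp only [WPOCases] at hst
          rcases hst with hst | ⟨hAst, hsub⟩
          · cases t with
            | var y =>
              rw [hW.ge_var] at htu
              subst htu
              exact hst₀
            | fn g ts =>
              rw [hW.gt_fn]; left
              exact hcompat2 _ _ _ hst (hGE_AGS g ts u htu)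
          · rcases hsub with ⟨i, hi, hge⟩ | ⟨g, ts, rfl, hjt, hpg⟩
            · cases t with
              | var y =>
                rw [hW.ge_var] at htu
                subst htu
                exact hst₀
              | fn g ts =>
                have hAtu := hGE_AGS g ts u htu
                have hlt := WPOAux.sz_lt ss i
                have hGi : GE (ss i) u :=
                  (ih (ss i) (Trm.fn g ts) u (by omega)).2.2 hge htu
                rw [hW.gt_fn]
                simp only [WPOCases]
                exact Or.inr ⟨hAGS_trans hAst hAtu, Or.inl ⟨i, hi, hGi⟩⟩
            · have hAtu := hGE_AGS g ts u htu
              rw [hW.ge_fn] at htu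
              simp only [WPOCases] at htu
              rcases htu with htu | ⟨_, hsub2⟩
              · rw [hW.gt_fn]; left; exact hcompat1 _ _ _ hAst htu
              · rcases hsub2 with ⟨j, hj, hgeju⟩ | ⟨f3, us, rfl, hku, hph⟩
                · have hlt := WPOAux.sz_lt ts j
                  exact (ih (Trm.fn f ss) (ts j) u (by omega)).2.1 (hjt j hj) hgeju
                · rw [hW.gt_fn]
                  simp only [WPOCases]
                  refine Or.inr ⟨hAGS_trans hAst hAtu, Or.inr ⟨f3, us, rfl, ?_, ?_⟩⟩
                  · intro k hk
                    have hlt := WPOAux.sz_lt us k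
                    exact (ih (Trm.fn f ss) (Trm.fn g ts) (us k) (by omega)).2.1
                      hst₀ (hGTGE _ _ (hku k hk))
                  · rcases hpg with hpg | ⟨hpg, hlex1⟩
                    · rcases hph with hph | ⟨hph, _⟩
                      · exact Or.inl (WPOAux.precGT_trans_GT hprec_trans hpg hph)
                      · exact Or.inl (WPOAux.precGT_trans_EQ hprec_trans hpg hph)
                    · rcases hph with hph | ⟨hph, hlex2⟩
                      · exact Or.inl (WPOAux.precEQ_trans_GT hprec_trans hpg hph)
                      · refine Or.inr ⟨WPOAux.precEQ_trans hprec_trans hpg hph, ?_⟩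
                        refine WPOAux.lexGT_lexGE hGTGE _ _ _ ?_ hlex1 hlex2
                        intro a ha b hb c hc
                        obtain ⟨i, _, rfl⟩ := List.mem_map.1 ha
                        obtain ⟨j, _, rfl⟩ := List.mem_map.1 hb
                        obtain ⟨k, _, rfl⟩ := List.mem_map.1 hc
                        have h1 := WPOAux.sz_lt ss i
                        have h2 := WPOAux.sz_lt ts j
                        have h3 := WPOAux.sz_lt us k
                        exact ih _ _ _ (by omega)
      -- Claim 3: GE s t → GE t u → GE s u
      · intro hst htu
        cases s with
        | var x =>
          rw [hW.ge_var] at hst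
          subst hst
          rw [hW.ge_var] at htu
          subst htu
          exact (hW.ge_var x _).2 rfl
        | fn f ss =>
          have hst₀ := hst
          rw [hW.ge_fn] at hst
          simp only [WPOCases] at hst
          rcases hst with hst | ⟨hAst, hsub⟩
          · cases t with
            | var y =>
              rw [hW.ge_var] at htu
              subst htu
              exact hst₀
            | fn g ts =>
              rw [hW.ge_fn]; left
              exact hcompat2 _ _ _ hst (hGE_AGS g ts u htu)
          · rcases hsub with ⟨i, hi, hge⟩ | ⟨g, ts, rfl, hjt, hpg⟩
            · cases t with
              | var y =>
                rw [hW.ge_var] at htu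
                subst htu
                exact hst₀
              | fn g ts =>
                have hAtu := hGE_AGS g ts u htu
                have hlt := WPOAux.sz_lt ss i
                have hGi : GE (ss i) u :=
                  (ih (ss i) (Trm.fn g ts) u (by omega)).2.2 hge htu
                rw [hW.ge_fn]
                simp only [WPOCases]
                exact Or.inr ⟨hAGS_trans hAst hAtu, Or.inl ⟨i, hi, hGi⟩⟩
            · have hAtu := hGE_AGS g ts u htu
              rw [hW.ge_fn] at htu
              simp only [WPOCases] at htu
              rcases htu with htu | ⟨_, hsub2⟩
              · rw [hW.ge_fn]; left; exact hcompat1 _ _ _ hAst htu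
              · rcases hsub2 with ⟨j, hj, hgeju⟩ | ⟨f3, us, rfl, hku, hph⟩
                · have hlt := WPOAux.sz_lt ts j
                  exact hGTGE _ _
                    ((ih (Trm.fn f ss) (ts j) u (by omega)).2.1 (hjt j hj) hgeju)
                · rw [hW.ge_fn]
                  simp only [WPOCases]
                  refine Or.inr ⟨hAGS_trans hAst hAtu, Or.inr ⟨f3, us, rfl, ?_, ?_⟩⟩
                  · intro k hk
                    have hlt := WPOAux.sz_lt us k
                    exact (ih (Trm.fn f ss) (Trm.fn g ts) (us k) (by omega)).1
                      hst₀ (hku k hk)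
                  · rcases hpg with hpg | ⟨hpg, hlex1⟩
                    · rcases hph with hph | ⟨hph, _⟩
                      · exact Or.inl (WPOAux.precGT_trans_GT hprec_trans hpg hph)
                      · exact Or.inl (WPOAux.precGT_trans_EQ hprec_trans hpg hph)
                    · rcases hph with hph | ⟨hph, hlex2⟩
                      · exact Or.inl (WPOAux.precEQ_trans_GT hprec_trans hpg hph)
                      · refine Or.inr ⟨WPOAux.precEQ_trans hprec_trans hpg hph, ?_⟩
                        refine WPOAux.lexGE_trans hGTGE _ _ _ ?_ hlex1 hlex2
                        intro a ha b hb c hc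
                        obtain ⟨i, _, rfl⟩ := List.mem_map.1 ha
                        obtain ⟨j, _, rfl⟩ := List.mem_map.1 hb
                        obtain ⟨k, _, rfl⟩ := List.mem_map.1 hc
                        have h1 := WPOAux.sz_lt ss i
                        have h2 := WPOAux.sz_lt ts j
                        have h3 := WPOAux.sz_lt us k
                        exact ih _ _ _ (by omega)
  exact ⟨fun s t u h1 h2 => (key _ s t u le_rfl).1 h1 h2,
         fun s t u h1 h2 => (key _ s t u le_rfl).2.1 h1 h2⟩
end

section
/- If the algebra A is weakly simple, then >_WPO has the subterm property: f(s1,...,si,...,sn) >_WPO s_i for every i. -/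
variable {F V : Type} {ar : F → ℕ}

/-! Reflexivity of `≥_WPO` holds by structural induction: `f(s̄) ≥ f(s̄)` is case (2b) with equal
precedence, where the arguments satisfy `f(s̄) > s_j` by case (2a) and the induction hypothesis
`s_j ≥ s_j`, which also makes `s̄` lexicographically `≥` itself. Weak simplicity supplies the
algebra comparisons `f(s̄) ⊵_A s_j` throughout, so the subterm property is case (2a) with `s_i ≥ s_i`. -/

lemma LexGE.refl {α : Type} {GE GT : α → α → Prop} :
    ∀ l : List α, (∀ a ∈ l, GE a a) → LexGE GE GT l l
  | [], _ => .nil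
  | a :: l, h => .tail (h a List.mem_cons_self) (refl l fun b hb => h b (List.mem_cons_of_mem a hb))

namespace IsWPO

variable {AGS AGT : Trm F ar V → Trm F ar V → Prop} {prec : F → F → Prop}
  {σ : ∀ f : F, List (Fin (ar f))} {GE GT : Trm F ar V → Trm F ar V → Prop}

lemma gt_fn_of_ge_arg (hW : IsWPO AGS AGT prec σ GE GT) {f : F} {ss : Fin (ar f) → Trm F ar V}
    {t : Trm F ar V} {i : Fin (ar f)} (hi : i ∈ σ f) (hA : AGS (.fn f ss) t) (hge : GE (ss i) t) :
    GT (.fn f ss) t :=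
  (hW.gt_fn f ss t).mpr (.inr ⟨hA, .inl ⟨i, hi, hge⟩⟩)

lemma ge_fn_of_precEQ (hW : IsWPO AGS AGT prec σ GE GT) {f g : F}
    {ss : Fin (ar f) → Trm F ar V} {ts : Fin (ar g) → Trm F ar V}
    (hA : AGS (.fn f ss) (.fn g ts)) (hargs : ∀ j ∈ σ g, GT (.fn f ss) (ts j))
    (hfg : precEQ prec f g) (hlex : LexGE GE GT ((σ f).map ss) ((σ g).map ts)) :
    GE (.fn f ss) (.fn g ts) :=
  (hW.ge_fn f ss _).mpr (.inr ⟨hA, .inr ⟨g, ts, rfl, hargs, .inr ⟨hfg, hlex⟩⟩⟩)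

lemma ge_refl (hW : IsWPO AGS AGT prec σ GE GT) (hprec_refl : ∀ f, prec f f)
    (hAGS_refl : ∀ t, AGS t t)
    (hsimple : ∀ (f : F) (ss : Fin (ar f) → Trm F ar V) (i : Fin (ar f)),
        AGS (.fn f ss) (ss i)) :
    ∀ t : Trm F ar V, GE t t
  | .var x => (hW.ge_var x _).mpr rfl
  | .fn f ss => by
    have ih : ∀ j, GE (ss j) (ss j) := fun j => ge_refl hW hprec_refl hAGS_refl hsimple (ss j)
    refine hW.ge_fn_of_precEQ (hAGS_refl _)
      (fun j hj => hW.gt_fn_of_ge_arg hj (hsimple f ss j) (ih j))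
      ⟨hprec_refl f, hprec_refl f⟩ (LexGE.refl _ ?_)
    simp only [List.forall_mem_map]
    exact fun j _ => ih j

end IsWPO

/-- If the algebra is weakly simple (in every argument position) and
the status is total, then `>_WPO` has the subterm property:
`f(s1,...,si,...,sn) >_WPO s_i` for every `i`. -/
theorem wpo_subterm
    {F V : Type} {ar : F → ℕ}
    (AGS AGT : Trm F ar V → Trm F ar V → Prop) (prec : F → F → Prop)
    (σ : ∀ f : F, List (Fin (ar f)))
    (GE GT : Trm F ar V → Trm F ar V → Prop)
    (hW : IsWPO AGS AGT prec σ GE GT)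
    (htot : TotalStatus σ)
    (hprec_refl : Reflexive prec)
    (hAGS_refl : Reflexive AGS)
    (hsimple : ∀ (f : F) (ss : Fin (ar f) → Trm F ar V) (i : Fin (ar f)),
        AGS (.fn f ss) (ss i)) :
    ∀ (f : F) (ss : Fin (ar f) → Trm F ar V) (i : Fin (ar f)),
      GT (.fn f ss) (ss i) := by
  intro f ss i
  have hi : i ∈ σ f := (htot f).mem_iff.mpr (List.mem_finRange i)
  exact hW.gt_fn_of_ge_arg hi (hsimple f ss i) (hW.ge_refl hprec_refl hAGS_refl hsimple (ss i))
end

section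
/- If the algebra A is strictly simple (f_A(...,a,...) > a in every argument), then GKBO and WPO coincide: s >_GKBO t iff s >_WPO t. -/
variable {F V : Type} {ar : F → ℕ}

/-- The case analysis of the GKBO definition: like WPO but without
case (2a) and without the recursive side condition in case (2b). -/
def GKBOCases (AGS AGT : Trm F ar V → Trm F ar V → Prop) (prec : F → F → Prop)
    (σ : ∀ f : F, List (Fin (ar f)))
    (lex : List (Trm F ar V) → List (Trm F ar V) → Prop)
    (f : F) (ss : Fin (ar f) → Trm F ar V) (t : Trm F ar V) : Prop :=
  AGT (.fn f ss) t ∨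
    (AGS (.fn f ss) t ∧
      ∃ g ts, t = Trm.fn g ts ∧
        (precGT prec f g ∨ (precEQ prec f g ∧ lex ((σ f).map ss) ((σ g).map ts))))

/-- The pair of relations (GE, GT) satisfies the defining equations of
the generalized Knuth-Bendix order. -/
structure IsGKBO (AGS AGT : Trm F ar V → Trm F ar V → Prop) (prec : F → F → Prop)
    (σ : ∀ f : F, List (Fin (ar f)))
    (GE GT : Trm F ar V → Trm F ar V → Prop) : Prop where
  ge_var : ∀ (x : V) (t : Trm F ar V), GE (.var x) t ↔ t = .var x
  gt_var : ∀ (x : V) (t : Trm F ar V), ¬ GT (.var x) t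
  gt_fn : ∀ (f : F) (ss : Fin (ar f) → Trm F ar V) (t : Trm F ar V),
    GT (.fn f ss) t ↔ GKBOCases AGS AGT prec σ (LexGT GE GT) f ss t
  ge_fn : ∀ (f : F) (ss : Fin (ar f) → Trm F ar V) (t : Trm F ar V),
    GE (.fn f ss) t ↔ GKBOCases AGS AGT prec σ (LexGE GE GT) f ss t

/-!
Strict simplicity makes both extra features of WPO redundant. Case (2a) is subsumed by case (1):
from `sᵢ ≥_WPO t` we get `sᵢ ≥_A t`, and `s >_A sᵢ` gives `s >_A t`. The side condition of
case (2b) holds automatically: `s ≥_A g(t₁, …, tₘ) >_A tⱼ` puts every `s >_A tⱼ` in case (1).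
Hence the defining equations of the two orders differ only through the relations compared
lexicographically, and structural induction on `s` shows that both pairs of relations agree.
-/

theorem LexGT.mono {α : Type} {GE GT GE' GT' : α → α → Prop} {l m : List α}
    (h : LexGT GE GT l m) (hGE : ∀ a ∈ l, ∀ b ∈ m, GE a b → GE' a b)
    (hGT : ∀ a ∈ l, ∀ b ∈ m, GT a b → GT' a b) : LexGT GE' GT' l m := by
  induction h with
  | cons_nil => exact .cons_nil
  | head h => exact .head (hGT _ (.head _) _ (.head _) h)
  | tail hge _ ih =>
    exact .tail (hGE _ (.head _) _ (.head _) hge)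
      (ih (fun a ha b hb => hGE a (.tail _ ha) b (.tail _ hb))
        (fun a ha b hb => hGT a (.tail _ ha) b (.tail _ hb)))

theorem LexGE.mono {α : Type} {GE GT GE' GT' : α → α → Prop} {l m : List α}
    (h : LexGE GE GT l m) (hGE : ∀ a ∈ l, ∀ b ∈ m, GE a b → GE' a b)
    (hGT : ∀ a ∈ l, ∀ b ∈ m, GT a b → GT' a b) : LexGE GE' GT' l m := by
  induction h with
  | nil => exact .nil
  | head h => exact .head (hGT _ (.head _) _ (.head _) h)
  | tail hge _ ih =>
    exact .tail (hGE _ (.head _) _ (.head _) hge)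
      (ih (fun a ha b hb => hGE a (.tail _ ha) b (.tail _ hb))
        (fun a ha b hb => hGT a (.tail _ ha) b (.tail _ hb)))

theorem LexGT.congr {α : Type} {GE GT GE' GT' : α → α → Prop} {l m : List α}
    (h : ∀ a ∈ l, ∀ b ∈ m, (GE a b ↔ GE' a b) ∧ (GT a b ↔ GT' a b)) :
    LexGT GE GT l m ↔ LexGT GE' GT' l m :=
  ⟨fun hl => hl.mono (fun a ha b hb => (h a ha b hb).1.1) (fun a ha b hb => (h a ha b hb).2.1),
    fun hl => hl.mono (fun a ha b hb => (h a ha b hb).1.2) (fun a ha b hb => (h a ha b hb).2.2)⟩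

theorem LexGE.congr {α : Type} {GE GT GE' GT' : α → α → Prop} {l m : List α}
    (h : ∀ a ∈ l, ∀ b ∈ m, (GE a b ↔ GE' a b) ∧ (GT a b ↔ GT' a b)) :
    LexGE GE GT l m ↔ LexGE GE' GT' l m :=
  ⟨fun hl => hl.mono (fun a ha b hb => (h a ha b hb).1.1) (fun a ha b hb => (h a ha b hb).2.1),
    fun hl => hl.mono (fun a ha b hb => (h a ha b hb).1.2) (fun a ha b hb => (h a ha b hb).2.2)⟩

section Cases

variable {AGS AGT : Trm F ar V → Trm F ar V → Prop} {prec : F → F → Prop}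
  {σ : ∀ f : F, List (Fin (ar f))} {GE GT : Trm F ar V → Trm F ar V → Prop}
  {lex lex' : List (Trm F ar V) → List (Trm F ar V) → Prop}
  {f : F} {ss : Fin (ar f) → Trm F ar V} {t : Trm F ar V}

theorem gkboCases_congr
    (h : ∀ g ts, lex ((σ f).map ss) ((σ g).map ts) ↔ lex' ((σ f).map ss) ((σ g).map ts)) :
    GKBOCases AGS AGT prec σ lex f ss t ↔ GKBOCases AGS AGT prec σ lex' f ss t := by
  simp only [GKBOCases, h]

theorem wpoCases_iff_gkboCases
    (hcompat1 : ∀ s t u, AGS s t → AGT t u → AGT s u)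
    (hcompat2 : ∀ s t u, AGT s t → AGS t u → AGT s u)
    (hstrict : ∀ (f : F) (ss : Fin (ar f) → Trm F ar V) (i : Fin (ar f)),
        AGT (.fn f ss) (ss i))
    (hGE : ∀ s t, GE s t → AGS s t) (hGT : ∀ u, AGT (.fn f ss) u → GT (.fn f ss) u) :
    WPOCases AGS AGT prec σ GE GT lex f ss t ↔ GKBOCases AGS AGT prec σ lex f ss t := by
  constructor
  · rintro (hgt | ⟨hge, ⟨i, -, hi⟩ | ⟨g, ts, rfl, -, hprec⟩⟩)
    · exact .inl hgt
    · exact .inl (hcompat2 _ _ _ (hstrict f ss i) (hGE _ _ hi))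
    · exact .inr ⟨hge, g, ts, rfl, hprec⟩
  · rintro (hgt | ⟨hge, g, ts, rfl, hprec⟩)
    · exact .inl hgt
    · exact .inr ⟨hge, .inr ⟨g, ts, rfl,
        fun j _ => hGT _ (hcompat1 _ _ _ hge (hstrict g ts j)), hprec⟩⟩

theorem IsWPO.algebra_ge_of_ge (hW : IsWPO AGS AGT prec σ GE GT) (hAGS_refl : ∀ s, AGS s s)
    (hAGT_AGS : ∀ s t, AGT s t → AGS s t) {s t : Trm F ar V} (h : GE s t) : AGS s t := by
  cases s with
  | var x => exact (hW.ge_var x t).1 h ▸ hAGS_refl _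
  | fn f ss =>
    rcases (hW.ge_fn f ss t).1 h with hgt | ⟨hge, -⟩
    · exact hAGT_AGS _ _ hgt
    · exact hge

end Cases

theorem gkbo_eq_wpo_of_strictly_simple_general
    {F V : Type} {ar : F → ℕ}
    (AGS AGT : Trm F ar V → Trm F ar V → Prop) (prec : F → F → Prop)
    (σ : ∀ f : F, List (Fin (ar f)))
    (GEw GTw GEg GTg : Trm F ar V → Trm F ar V → Prop)
    (hW : IsWPO AGS AGT prec σ GEw GTw)
    (hG : IsGKBO AGS AGT prec σ GEg GTg)
    (hAGS_refl : Reflexive AGS)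
    (hAGT_AGS : ∀ s t, AGT s t → AGS s t)
    (hcompat1 : ∀ s t u, AGS s t → AGT t u → AGT s u)
    (hcompat2 : ∀ s t u, AGT s t → AGS t u → AGT s u)
    (hstrict : ∀ (f : F) (ss : Fin (ar f) → Trm F ar V) (i : Fin (ar f)),
        AGT (.fn f ss) (ss i)) :
    ∀ s t : Trm F ar V, GTg s t ↔ GTw s t := by
  have hcases : ∀ f ss t lex, WPOCases AGS AGT prec σ GEw GTw lex f ss t ↔
      GKBOCases AGS AGT prec σ lex f ss t := fun f ss _ _ =>
    wpoCases_iff_gkboCases hcompat1 hcompat2 hstrict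
      (fun _ _ => hW.algebra_ge_of_ge hAGS_refl hAGT_AGS) fun u h => (hW.gt_fn f ss u).2 (.inl h)
  suffices h : ∀ s t, (GTg s t ↔ GTw s t) ∧ (GEg s t ↔ GEw s t) from fun s t => (h s t).1
  intro s
  induction s with
  | var x =>
    exact fun t => ⟨iff_of_false (hG.gt_var x t) (hW.gt_var x t), by rw [hG.ge_var, hW.ge_var]⟩
  | fn f ss ih =>
    have hargs : ∀ g ts, ∀ a ∈ (σ f).map ss, ∀ b ∈ (σ g).map ts,
        (GEg a b ↔ GEw a b) ∧ (GTg a b ↔ GTw a b) := by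
      rintro g ts a ha b -
      obtain ⟨i, -, rfl⟩ := List.mem_map.1 ha
      exact (ih i b).symm
    intro t
    rw [hG.gt_fn, hW.gt_fn, hcases, hG.ge_fn, hW.ge_fn, hcases]
    exact ⟨gkboCases_congr fun g ts => LexGT.congr (hargs g ts),
      gkboCases_congr fun g ts => LexGE.congr (hargs g ts)⟩

/-- If the algebra is strictly simple (`f_A(...,a,...) > a` in every
argument), then GKBO and WPO coincide: `s >_GKBO t` iff `s >_WPO t`. -/
theorem gkbo_eq_wpo_of_strictly_simple
    {F V : Type} {ar : F → ℕ}
    (AGS AGT : Trm F ar V → Trm F ar V → Prop) (prec : F → F → Prop)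
    (σ : ∀ f : F, List (Fin (ar f)))
    (GEw GTw GEg GTg : Trm F ar V → Trm F ar V → Prop)
    (hW : IsWPO AGS AGT prec σ GEw GTw)
    (hG : IsGKBO AGS AGT prec σ GEg GTg)
    (htot : TotalStatus σ)
    (hAGS_refl : Reflexive AGS)
    (hAGT_AGS : ∀ s t, AGT s t → AGS s t)
    (hcompat1 : ∀ s t u, AGS s t → AGT t u → AGT s u)
    (hcompat2 : ∀ s t u, AGT s t → AGS t u → AGT s u)
    (hstrict : ∀ (f : F) (ss : Fin (ar f) → Trm F ar V) (i : Fin (ar f)),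
        AGT (.fn f ss) (ss i)) :
    ∀ s t : Trm F ar V, GTg s t ↔ GTw s t :=
  gkbo_eq_wpo_of_strictly_simple_general AGS AGT prec σ GEw GTw GEg GTg hW hG hAGS_refl hAGT_AGS
    hcompat1 hcompat2 hstrict
end

section
/- Let g ∈ Σ be least in the precedence (f ≿ g for every f ∈ Σ) with σ(g) = [] (empty status). If x ⊵_A t where t = g(t1,...,tm), then s ≥_WPO t{x ↦ s} for every non-variable term s = f(s1,...,sn). -/
variable {F V : Type} {ar : F → ℕ}

namespace IsWPO

variable {AGS AGT : Trm F ar V → Trm F ar V → Prop} {prec : F → F → Prop}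
  {σ : ∀ f : F, List (Fin (ar f))} {GE GT : Trm F ar V → Trm F ar V → Prop}

theorem ge_fn_of_status_eq_nil (hW : IsWPO AGS AGT prec σ GE GT)
    {f g : F} {ss : Fin (ar f) → Trm F ar V} {us : Fin (ar g) → Trm F ar V}
    (hg : σ g = []) (hfg : prec f g) (hA : AGS (.fn f ss) (.fn g us)) :
    GE (.fn f ss) (.fn g us) := by
  rw [hW.ge_fn]
  refine Or.inr ⟨hA, Or.inr ⟨g, us, rfl, by simp [hg], ?_⟩⟩
  by_cases hgf : prec g f
  · exact Or.inr ⟨⟨hfg, hgf⟩, hg ▸ LexGE.nil⟩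
  · exact Or.inl ⟨hfg, hgf⟩

end IsWPO

/-- Let `g` be least in the precedence with empty status.  If
`x ⊵_A t` where `t = g(t1,...,tm)`, then `s ≥_WPO t{x ↦ s}` for every
non-variable term `s = f(s1,...,sn)`. -/
theorem wpo_least_refinement
    {F V : Type} {ar : F → ℕ} [DecidableEq V]
    (AGS AGT : Trm F ar V → Trm F ar V → Prop) (prec : F → F → Prop)
    (σ : ∀ f : F, List (Fin (ar f)))
    (GE GT : Trm F ar V → Trm F ar V → Prop)
    (hW : IsWPO AGS AGT prec σ GE GT)
    (hAGS_stable : ∀ (s t : Trm F ar V) (θ : V → Trm F ar V),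
        AGS s t → AGS (s.subst θ) (t.subst θ))
    (g : F) (hleast : ∀ f : F, prec f g) (hg : σ g = [])
    (x : V) (ts : Fin (ar g) → Trm F ar V)
    (hxt : AGS (.var x) (.fn g ts))
    (f : F) (ss : Fin (ar f) → Trm F ar V) :
    GE (.fn f ss)
      ((Trm.fn g ts).subst fun v => if v = x then .fn f ss else .var v) := by
  set θ : V → Trm F ar V := fun v => if v = x then .fn f ss else .var v
  have hA : AGS (.fn f ss) ((Trm.fn g ts).subst θ) := by
    simpa [θ, Trm.subst] using hAGS_stable _ _ θ hxt
  exact hW.ge_fn_of_status_eq_nil hg (hleast f) hA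
end

section
/- Suppose the algebra A is strictly simple with respect to σ, and f ∈ Σ is such that for every g ∈ Σ, either f ≻ g, or f ∼ g and σ(g) = []. Then s = f(s1,...,sn) ⊵_A y (for a variable y) implies s{y ↦ t} ≥_WPO t for every non-variable term t = g(t1,...,tm). -/
variable {F V : Type} {ar : F → ℕ}

/-- Suppose the algebra is strictly simple with respect to `σ`, and `f`
is such that for every `g`, either `f ≻ g`, or `f ∼ g` and `σ(g) = []`.
Then `s = f(s1,...,sn) ⊵_A y` (for a variable `y`) implies
`s{y ↦ t} ≥_WPO t` for every non-variable term `t = g(t1,...,tm)`. -/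
theorem wpo_greatest_refinement
    {F V : Type} {ar : F → ℕ} [DecidableEq V]
    (AGS AGT : Trm F ar V → Trm F ar V → Prop) (prec : F → F → Prop)
    (σ : ∀ f : F, List (Fin (ar f)))
    (GE GT : Trm F ar V → Trm F ar V → Prop)
    (hW : IsWPO AGS AGT prec σ GE GT)
    (hAGS_stable : ∀ (s t : Trm F ar V) (θ : V → Trm F ar V),
        AGS s t → AGS (s.subst θ) (t.subst θ))
    (hcompat : ∀ s t u, AGS s t → AGT t u → AGT s u)
    (hstrict : ∀ (h : F) (us : Fin (ar h) → Trm F ar V) (i : Fin (ar h)),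
        i ∈ σ h → AGT (.fn h us) (us i))
    (f : F)
    (hgreatest : ∀ g : F, precGT prec f g ∨ (precEQ prec f g ∧ σ g = []))
    (ss : Fin (ar f) → Trm F ar V) (y : V)
    (hsy : AGS (.fn f ss) (.var y))
    (g : F) (ts : Fin (ar g) → Trm F ar V) :
    GE ((Trm.fn f ss).subst fun v => if v = y then .fn g ts else .var v)
      (.fn g ts) := by
  set θ : V → Trm F ar V := fun v => if v = y then .fn g ts else .var v with hθ
  have hAGS : AGS ((Trm.fn f ss).subst θ) (.fn g ts) := by
    have := hAGS_stable _ _ θ hsy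
    simpa [Trm.subst, hθ] using this
  have hsub : (Trm.fn f ss).subst θ = Trm.fn f (fun i => (ss i).subst θ) := rfl
  rw [hsub] at hAGS ⊢
  rw [hW.ge_fn]
  right
  refine ⟨hAGS, Or.inr ⟨g, ts, rfl, ?_, ?_⟩⟩
  · intro j hj
    rw [hW.gt_fn]
    exact Or.inl (hcompat _ _ _ hAGS (hstrict g ts j hj))
  · rcases hgreatest g with h | ⟨heq, hnil⟩
    · exact Or.inl h
    · exact Or.inr ⟨heq, hnil ▸ LexGE.nil⟩
end
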